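/- If a Banach algebra A has the I-w*w property on A**, meaning that for every a'' ∈ A** the map b'' ↦ a''b'' (first Arens product) is weak-star to weak continuous, then A is Arens regular. -/

import Mathlib

set_option maxHeartbeats 1000000

open Filter Topology ContinuousLinearMap NormedSpace

namespace NormedSpace

/-- The topological dual of a seminormed space `E` (as `NormedSpace.Dual` in the older Mathlib). -/
def Dual (𝕜 : Type*) [NontriviallyNormedField 𝕜] (E : Type*) [SeminormedAddCommGroup E]
    [NormedSpace 𝕜 E] : Type _ :=
  E →L[𝕜] 𝕜

noncomputable instance (𝕜 : Type*) [NontriviallyNormedField 𝕜] (E : Type*) [SeminormedAddCommGroup E]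
    [NormedSpace 𝕜 E] : SeminormedAddCommGroup (Dual 𝕜 E) :=
  ContinuousLinearMap.toSeminormedAddCommGroup

noncomputable instance (𝕜 : Type*) [NontriviallyNormedField 𝕜] (E : Type*) [SeminormedAddCommGroup E]
    [NormedSpace 𝕜 E] : NormedSpace 𝕜 (Dual 𝕜 E) :=
  ContinuousLinearMap.toNormedSpace

instance (𝕜 : Type*) [NontriviallyNormedField 𝕜] (E : Type*) [SeminormedAddCommGroup E]
    [NormedSpace 𝕜 E] : FunLike (Dual 𝕜 E) E 𝕜 :=
  ContinuousLinearMap.funLike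

instance (𝕜 : Type*) [NontriviallyNormedField 𝕜] (E : Type*) [SeminormedAddCommGroup E]
    [NormedSpace 𝕜 E] : ContinuousLinearMapClass (Dual 𝕜 E) 𝕜 E 𝕜 :=
  ContinuousLinearMap.continuousSemilinearMapClass

end NormedSpace

noncomputable section ArensSetup

/-- The adjoint (transpose) of a continuous linear map between normed spaces. -/
def adjCLM {E F : Type*} [SeminormedAddCommGroup E] [NormedSpace ℝ E]
    [SeminormedAddCommGroup F] [NormedSpace ℝ F] (T : E →L[ℝ] F) :
    Dual ℝ F →L[ℝ] Dual ℝ E :=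
  (ContinuousLinearMap.compL ℝ E F ℝ).flip T

@[simp] theorem adjCLM_apply {E F : Type*} [SeminormedAddCommGroup E] [NormedSpace ℝ E]
    [SeminormedAddCommGroup F] [NormedSpace ℝ F] (T : E →L[ℝ] F) (g : Dual ℝ F) (x : E) :
    adjCLM T g x = g (T x) := rfl

/-- One-step Arens-type adjoint of a bounded bilinear map:
`ext1 β g' e = g' ∘ (β e)`. -/
def ext1 {E F G : Type*} [SeminormedAddCommGroup E] [NormedSpace ℝ E]
    [SeminormedAddCommGroup F] [NormedSpace ℝ F] [SeminormedAddCommGroup G] [NormedSpace ℝ G]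
    (β : E →L[ℝ] F →L[ℝ] G) : Dual ℝ G →L[ℝ] E →L[ℝ] Dual ℝ F :=
  ((ContinuousLinearMap.compL ℝ F G ℝ).flip.comp β).flip

@[simp] theorem ext1_apply {E F G : Type*} [SeminormedAddCommGroup E] [NormedSpace ℝ E]
    [SeminormedAddCommGroup F] [NormedSpace ℝ F] [SeminormedAddCommGroup G] [NormedSpace ℝ G]
    (β : E →L[ℝ] F →L[ℝ] G) (g' : Dual ℝ G) (e : E) (f : F) :
    ext1 β g' e f = g' (β e f) := rfl

/-- Triple adjoint: the (first) Arens extension of a bounded bilinear map to the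
second duals. -/
def ext3 {E F G : Type*} [SeminormedAddCommGroup E] [NormedSpace ℝ E]
    [SeminormedAddCommGroup F] [NormedSpace ℝ F] [SeminormedAddCommGroup G] [NormedSpace ℝ G]
    (β : E →L[ℝ] F →L[ℝ] G) :
    Dual ℝ (Dual ℝ E) →L[ℝ] Dual ℝ (Dual ℝ F) →L[ℝ] Dual ℝ (Dual ℝ G) :=
  ext1 (ext1 (ext1 β))

variable (A : Type*) [NonUnitalNormedRing A] [NormedSpace ℝ A]
  [SMulCommClass ℝ A A] [IsScalarTower ℝ A A] [CompleteSpace A]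

/-- The first (left) Arens product on `A**`: `⟨a''b'', a'⟩ = ⟨a'', b''a'⟩`. -/
def fArens : Dual ℝ (Dual ℝ A) →L[ℝ] Dual ℝ (Dual ℝ A) →L[ℝ] Dual ℝ (Dual ℝ A) :=
  ext3 (ContinuousLinearMap.mul ℝ A)

/-- The second (right) Arens product on `A**`: `⟨a''∘b'', a'⟩ = ⟨b'', a'∘a''⟩`. -/
def sArens : Dual ℝ (Dual ℝ A) →L[ℝ] Dual ℝ (Dual ℝ A) →L[ℝ] Dual ℝ (Dual ℝ A) :=
  (ext3 (ContinuousLinearMap.mul ℝ A).flip).flip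

/-- `A` is Arens regular when the two Arens products on `A**` coincide. -/
def ArensRegular : Prop := fArens A = sArens A

variable {A}

/-- Weak-star to weak continuity for a map from the dual of `E` into `F`. -/
def WStarToWCont {E F : Type*} [SeminormedAddCommGroup E] [NormedSpace ℝ E]
    [SeminormedAddCommGroup F] [NormedSpace ℝ F] (f : Dual ℝ E → F) : Prop :=
  Continuous fun x : WeakDual ℝ E => toWeakSpace ℝ F (f (WeakDual.toStrongDual x))

variable (A)

/-- The second adjoint `T'' : A** → A**` of `T : A → A`. -/
def secondAdj (T : A →L[ℝ] A) : Dual ℝ (Dual ℝ A) →L[ℝ] Dual ℝ (Dual ℝ A) :=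
  adjCLM (adjCLM T)

/-- Left action of `A` on `A*`: `⟨a·a', b⟩ = ⟨a', ba⟩`. -/
def dualLeft : A →L[ℝ] Dual ℝ A →L[ℝ] Dual ℝ A :=
  (ext1 (ContinuousLinearMap.mul ℝ A).flip).flip

/-- Right action of `A` on `A*`: `⟨a'·a, b⟩ = ⟨a', ab⟩`. -/
def dualRight : Dual ℝ A →L[ℝ] A →L[ℝ] Dual ℝ A :=
  ext1 (ContinuousLinearMap.mul ℝ A)

/-- Left action of `A**` (first Arens product) on `A***`. -/
def dualLeft2 : Dual ℝ (Dual ℝ A) →L[ℝ] Dual ℝ (Dual ℝ (Dual ℝ A)) →L[ℝ]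
    Dual ℝ (Dual ℝ (Dual ℝ A)) :=
  (ext1 (fArens A).flip).flip

/-- Right action of `A**` (first Arens product) on `A***`. -/
def dualRight2 : Dual ℝ (Dual ℝ (Dual ℝ A)) →L[ℝ] Dual ℝ (Dual ℝ A) →L[ℝ]
    Dual ℝ (Dual ℝ (Dual ℝ A)) :=
  ext1 (fArens A)

end ArensSetup

section BimoduleSetup

set_option maxHeartbeats 1000000

open Filter Topology ContinuousLinearMap NormedSpace

/-- A Banach `A`-bimodule: bounded bilinear left and right actions satisfying the
usual compatibility axioms. -/
structure BanachBimodule (A X : Type*) [NonUnitalNormedRing A] [NormedSpace ℝ A]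
    [SMulCommClass ℝ A A] [IsScalarTower ℝ A A]
    [NormedAddCommGroup X] [NormedSpace ℝ X] [CompleteSpace X] where
  l : A →L[ℝ] X →L[ℝ] X
  r : X →L[ℝ] A →L[ℝ] X
  l_mul : ∀ a b x, l (a * b) x = l a (l b x)
  r_mul : ∀ x a b, r (r x a) b = r x (a * b)
  l_r : ∀ a x b, l a (r x b) = r (l a x) b

variable {A X : Type*} [NonUnitalNormedRing A] [NormedSpace ℝ A]
  [SMulCommClass ℝ A A] [IsScalarTower ℝ A A] [CompleteSpace A]
  [NormedAddCommGroup X] [NormedSpace ℝ X] [CompleteSpace X]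

/-- Left action of `A` on `X*`: `⟨a·f, x⟩ = ⟨f, x·a⟩`. -/
noncomputable def modDualLeft (M : BanachBimodule A X) : A →L[ℝ] Dual ℝ X →L[ℝ] Dual ℝ X :=
  (ext1 M.r.flip).flip

/-- Right action of `A` on `X*`: `⟨f·a, x⟩ = ⟨f, a·x⟩`. -/
noncomputable def modDualRight (M : BanachBimodule A X) : Dual ℝ X →L[ℝ] A →L[ℝ] Dual ℝ X :=
  ext1 M.l

/-- Left action of `A**` on `X**` (first Arens extension). -/
noncomputable def modL2 (M : BanachBimodule A X) :
    Dual ℝ (Dual ℝ A) →L[ℝ] Dual ℝ (Dual ℝ X) →L[ℝ] Dual ℝ (Dual ℝ X) :=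
  ext3 M.l

/-- Right action of `A**` on `X**` (first Arens extension); `modR2 M x'' a'' = x''a''`. -/
noncomputable def modR2 (M : BanachBimodule A X) :
    Dual ℝ (Dual ℝ X) →L[ℝ] Dual ℝ (Dual ℝ A) →L[ℝ] Dual ℝ (Dual ℝ X) :=
  ext3 M.r

/-- Left action of `A**` on `X***`: `⟨a''·x''', x''⟩ = ⟨x''', x''a''⟩`. -/
noncomputable def modL3 (M : BanachBimodule A X) :
    Dual ℝ (Dual ℝ A) →L[ℝ] Dual ℝ (Dual ℝ (Dual ℝ X)) →L[ℝ] Dual ℝ (Dual ℝ (Dual ℝ X)) :=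
  (ext1 (modR2 M).flip).flip

/-- Right action of `A**` on `X***`: `⟨x'''·a'', x''⟩ = ⟨x''', a''x''⟩`. -/
noncomputable def modR3 (M : BanachBimodule A X) :
    Dual ℝ (Dual ℝ (Dual ℝ X)) →L[ℝ] Dual ℝ (Dual ℝ A) →L[ℝ] Dual ℝ (Dual ℝ (Dual ℝ X)) :=
  ext1 (modL2 M)

end BimoduleSetup

section DerivationSetup

variable {B Y : Type*} [SeminormedAddCommGroup B] [NormedSpace ℝ B]
  [SeminormedAddCommGroup Y] [NormedSpace ℝ Y]

/-- `D` is a derivation with respect to the multiplication `m` and the module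
actions `l`, `r`. -/
def IsDeriv (m : B →L[ℝ] B →L[ℝ] B) (l : B →L[ℝ] Y →L[ℝ] Y)
    (r : Y →L[ℝ] B →L[ℝ] Y) (D : B →L[ℝ] Y) : Prop :=
  ∀ a b, D (m a b) = l a (D b) + r (D a) b

/-- `D` is an inner derivation: `D a = a·y − y·a` for some fixed `y`. -/
def IsInner (l : B →L[ℝ] Y →L[ℝ] Y) (r : Y →L[ℝ] B →L[ℝ] Y) (D : B →L[ℝ] Y) : Prop :=
  ∃ y, ∀ a, D a = l a y - r y a

/-- `D` is a `T-S`-derivation: `D(ab) = T(a)·D(b) + D(a)·S(b)`. -/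
def IsTSDeriv (m : B →L[ℝ] B →L[ℝ] B) (l : B →L[ℝ] Y →L[ℝ] Y)
    (r : Y →L[ℝ] B →L[ℝ] Y) (T S : B →L[ℝ] B) (D : B →L[ℝ] Y) : Prop :=
  ∀ a b, D (m a b) = l (T a) (D b) + r (D a) (S b)

/-- `D` is an inner `T-S`-derivation: `D a = T(a)·y − y·S(a)` for some fixed `y`. -/
def IsTSInner (l : B →L[ℝ] Y →L[ℝ] Y) (r : Y →L[ℝ] B →L[ℝ] Y)
    (T S : B →L[ℝ] B) (D : B →L[ℝ] Y) : Prop :=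
  ∃ y, ∀ a, D a = l (T a) y - r y (S a)

end DerivationSetup

/-!
Fix `a''`. Both `b'' ↦ a''b''` and `b'' ↦ a''∘b''` are weak-star continuous on `A**`: the second
always, the first because weak continuity is stronger. They agree on the canonical image of `A`.
A weak-star continuous functional on `A**` is evaluation at a point of `A*` (the weak
representation theorem), so it is determined by its values on `A`; hence the two maps coincide.
-/

namespace WeakDual

variable {𝕜 : Type*} [NontriviallyNormedField 𝕜]

theorem exists_eq_apply_of_continuous {E : Type*} [AddCommGroup E] [TopologicalSpace E]
    [Module 𝕜 E] (φ : StrongDual 𝕜 E →ₗ[𝕜] 𝕜) (hφ : Continuous fun x : WeakDual 𝕜 E => φ x) :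
    ∃ e : E, ∀ x, φ x = x e := by
  obtain ⟨e, he⟩ := LinearMap.dualEmbedding_surjective (topDualPairing 𝕜 E) ⟨φ, hφ⟩
  exact ⟨e, fun x => (congrArg (fun f : StrongDual 𝕜 (WeakDual 𝕜 E) => f x) he).symm⟩

theorem linearMap_ext_inclusionInDoubleDual {E : Type*} [SeminormedAddCommGroup E]
    [NormedSpace 𝕜 E] {φ ψ : StrongDual 𝕜 (StrongDual 𝕜 E) →ₗ[𝕜] 𝕜}
    (hφ : Continuous fun x : WeakDual 𝕜 (StrongDual 𝕜 E) => φ x)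
    (hψ : Continuous fun x : WeakDual 𝕜 (StrongDual 𝕜 E) => ψ x)
    (h : ∀ a, φ (inclusionInDoubleDual 𝕜 E a) = ψ (inclusionInDoubleDual 𝕜 E a)) : φ = ψ := by
  obtain ⟨f, hf⟩ := exists_eq_apply_of_continuous (φ - ψ) (hφ.sub hψ)
  have hf0 : f = 0 := ContinuousLinearMap.ext fun a => by
    simpa [h] using (hf (inclusionInDoubleDual 𝕜 E a)).symm
  ext x
  simpa [hf0, sub_eq_zero] using hf x

end WeakDual

section WeakStarContinuity

def WStarToWStarCont {E F : Type*} [SeminormedAddCommGroup E] [NormedSpace ℝ E]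
    [SeminormedAddCommGroup F] [NormedSpace ℝ F] (f : Dual ℝ E → Dual ℝ F) : Prop :=
  Continuous fun x : WeakDual ℝ E => StrongDual.toWeakDual (f (WeakDual.toStrongDual x))

variable {E F : Type*} [SeminormedAddCommGroup E] [NormedSpace ℝ E]
  [SeminormedAddCommGroup F] [NormedSpace ℝ F]

theorem WStarToWCont.wStarToWStarCont {f : Dual ℝ E → Dual ℝ F} (hf : WStarToWCont f) :
    WStarToWStarCont f :=
  WeakDual.continuous_of_continuous_eval fun y =>
    (WeakBilin.eval_continuous (topDualPairing ℝ (Dual ℝ F)).flip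
      (inclusionInDoubleDual ℝ F y)).comp hf

theorem ContinuousLinearMap.ext_inclusionInDoubleDual {T S : Dual ℝ (Dual ℝ E) →L[ℝ] Dual ℝ F}
    (hT : WStarToWStarCont T) (hS : WStarToWStarCont S)
    (h : ∀ a, T (inclusionInDoubleDual ℝ E a) = S (inclusionInDoubleDual ℝ E a)) : T = S := by
  refine ContinuousLinearMap.ext fun x => ContinuousLinearMap.ext fun y => ?_
  have hy := WeakDual.linearMap_ext_inclusionInDoubleDual
    (φ := (ContinuousLinearMap.apply ℝ ℝ y).toLinearMap ∘ₗ T.toLinearMap)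
    (ψ := (ContinuousLinearMap.apply ℝ ℝ y).toLinearMap ∘ₗ S.toLinearMap)
    ((WeakDual.eval_continuous y).comp hT) ((WeakDual.eval_continuous y).comp hS)
    (fun a => congrArg (· y) (h a))
  exact LinearMap.congr_fun hy x

end WeakStarContinuity

section ArensProducts

variable {A : Type*} [NonUnitalNormedRing A] [NormedSpace ℝ A]
  [SMulCommClass ℝ A A] [IsScalarTower ℝ A A]

theorem sArens_wStarToWStarCont (a'' : Dual ℝ (Dual ℝ A)) :
    WStarToWStarCont (sArens A a'') :=
  WeakDual.continuous_of_continuous_eval fun a' =>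
    WeakDual.eval_continuous (ext1 (ext1 (ContinuousLinearMap.mul ℝ A).flip) a'' a')

theorem fArens_inclusionInDoubleDual_right (a'' : Dual ℝ (Dual ℝ A)) (b : A) :
    fArens A a'' (inclusionInDoubleDual ℝ A b) = sArens A a'' (inclusionInDoubleDual ℝ A b) :=
  rfl

end ArensProducts

section Statements
set_option maxHeartbeats 1000000
open Filter Topology ContinuousLinearMap NormedSpace

variable {A : Type*} [NonUnitalNormedRing A] [NormedSpace ℝ A]
  [SMulCommClass ℝ A A] [IsScalarTower ℝ A A] [CompleteSpace A]

/-- If `A**` has the `I-w*w` property, then `A` is Arens regular. -/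
theorem arensRegular_of_Iwsw
    (hw : ∀ a'' : Dual ℝ (Dual ℝ A), WStarToWCont (fun b'' => fArens A a'' b'')) :
    ArensRegular A :=
  ContinuousLinearMap.ext fun a'' =>
    ContinuousLinearMap.ext_inclusionInDoubleDual (hw a'').wStarToWStarCont
      (sArens_wStarToWStarCont a'') (fArens_inclusionInDoubleDual_right a'')

end Statements
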